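/- arXiv:1907.03510 — 2 statements merged into one kernel-verified Lean document; each statement's English description precedes it below -/
import Mathlib

section
/- If 𝔉 and 𝔊 are asymptotically alike coarse ultrafilters on a metric space X and f : X → Y is a coarse map to a metric space Y, then f_*𝔉 and f_*𝔊 are asymptotically alike coarse ultrafilters on Y. -/
open Set Bornology Metric

/-- `E ⊆ X × X` is an entourage if `sup_{(x,y) ∈ E} d(x,y) < ∞`. -/
def IsEnt {X : Type*} [PseudoMetricSpace X] (E : Set (X × X)) : Prop :=
  ∃ C : ℝ, ∀ p ∈ E, dist p.1 p.2 ≤ C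

/-- `E[A] = {y : ∃ a ∈ A, (a,y) ∈ E}`. -/
def entImg {X : Type*} [PseudoMetricSpace X] (E : Set (X × X)) (A : Set X) : Set X :=
  {y | ∃ a ∈ A, (a, y) ∈ E}

/-- `A` and `B` are not coarsely disjoint: some entourage `E` has `E[A] ∩ E[B]` unbounded. -/
def NotCD {X : Type*} [PseudoMetricSpace X] (A B : Set X) : Prop :=
  ∃ E : Set (X × X), IsEnt E ∧ ¬ IsBounded (entImg E A ∩ entImg E B)

/-- `A` and `B` are coarsely disjoint: every entourage `E` has `E[A] ∩ E[B]` bounded. -/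
def CD {X : Type*} [PseudoMetricSpace X] (A B : Set X) : Prop :=
  ∀ E : Set (X × X), IsEnt E → IsBounded (entImg E A ∩ entImg E B)

/-- Coarsely uniform: `f × f` maps entourages to entourages. -/
def CUnif {X Y : Type*} [PseudoMetricSpace X] [PseudoMetricSpace Y] (f : X → Y) : Prop :=
  ∀ E : Set (X × X), IsEnt E → IsEnt ((fun p : X × X => (f p.1, f p.2)) '' E)

/-- Coarsely proper: preimages of bounded sets are bounded. -/
def CProper {X Y : Type*} [PseudoMetricSpace X] [PseudoMetricSpace Y] (f : X → Y) : Prop :=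
  ∀ B : Set Y, IsBounded B → IsBounded (f ⁻¹' B)

/-- A coarse map is coarsely uniform and coarsely proper. -/
def Coarse {X Y : Type*} [PseudoMetricSpace X] [PseudoMetricSpace Y] (f : X → Y) : Prop :=
  CUnif f ∧ CProper f

/-- Coarsely injective: `(f × f)⁻¹` of any entourage is an entourage. -/
def CInj {X Y : Type*} [PseudoMetricSpace X] [PseudoMetricSpace Y] (f : X → Y) : Prop :=
  ∀ F : Set (Y × Y), IsEnt F → IsEnt ((fun p : X × X => (f p.1, f p.2)) ⁻¹' F)

/-- A coarse ultrafilter on a metric space. -/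
structure CUF (X : Type*) [PseudoMetricSpace X] where
  sets : Set (Set X)
  pairClose : ∀ A ∈ sets, ∀ B ∈ sets, NotCD A B
  split : ∀ A B : Set X, A ∪ B ∈ sets → A ∈ sets ∨ B ∈ sets
  univ_mem : Set.univ ∈ sets

/-- Pushforward system of sets of a coarse ultrafilter along a map. -/
def push {X Y : Type*} [PseudoMetricSpace X] [PseudoMetricSpace Y] (f : X → Y) (F : CUF X) :
    Set (Set Y) :=
  {A : Set Y | f ⁻¹' A ∈ F.sets}

/-- Asymptotically alike coarse ultrafilters. -/
def AAlike {X : Type*} [PseudoMetricSpace X] (F G : CUF X) : Prop :=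
  ∀ A ∈ F.sets, ∀ B ∈ G.sets, NotCD A B

/-- Asymptotically alike, on raw systems of subsets. -/
def AAlikeS {X : Type*} [PseudoMetricSpace X] (S T : Set (Set X)) : Prop :=
  ∀ A ∈ S, ∀ B ∈ T, NotCD A B

theorem NotCD.of_preimage {X Y : Type*} [PseudoMetricSpace X] [PseudoMetricSpace Y]
    {f : X → Y} (hf : Coarse f) {A B : Set Y} (h : NotCD (f ⁻¹' A) (f ⁻¹' B)) : NotCD A B := by
  obtain ⟨E, hE, hunb⟩ := h
  refine ⟨(fun p : X × X => (f p.1, f p.2)) '' E, hf.1 E hE, fun hbdd => hunb ?_⟩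
  refine (hf.2 _ hbdd).subset ?_
  rintro x ⟨⟨a, ha, haE⟩, ⟨b, hb, hbE⟩⟩
  exact ⟨⟨f a, ha, (a, x), haE, rfl⟩, ⟨f b, hb, (b, x), hbE, rfl⟩⟩

theorem AAlikeS.push {X Y : Type*} [PseudoMetricSpace X] [PseudoMetricSpace Y]
    {f : X → Y} (hf : Coarse f) {F G : CUF X} (h : AAlike F G) :
    AAlikeS (push f F) (push f G) :=
  fun _ hA _ hB => NotCD.of_preimage hf (h _ hA _ hB)

def CUF.map {X Y : Type*} [PseudoMetricSpace X] [PseudoMetricSpace Y]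
    {f : X → Y} (hf : Coarse f) (F : CUF X) : CUF Y where
  sets := push f F
  pairClose _ hA _ hB := NotCD.of_preimage hf (F.pairClose _ hA _ hB)
  split A B hAB := F.split (f ⁻¹' A) (f ⁻¹' B) hAB
  univ_mem := F.univ_mem

/-- pushforwards of asymptotically alike coarse ultrafilters along a coarse
map are asymptotically alike coarse ultrafilters. -/
theorem stmt5 {X Y : Type*} [MetricSpace X] [MetricSpace Y] (f : X → Y)
    (hf : Coarse f) (F G : CUF X) (h : AAlike F G) :
    (∃ F' : CUF Y, F'.sets = push f F) ∧
    (∀ F' G' : CUF Y, F'.sets = push f F → G'.sets = push f G → AAlike F' G') := by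
  refine ⟨⟨CUF.map hf F, rfl⟩, fun F' G' hF hG => ?_⟩
  have hpush := AAlikeS.push hf h
  rw [← hF, ← hG] at hpush
  exact hpush
end

section
/- If f, g : X → Y are coarse maps between metric spaces such that for every coarse ultrafilter 𝔉 on X the pushforwards f_*𝔉 and g_*𝔉 are asymptotically alike, then f and g are close (i.e., sup_{x∈X} d(f(x), g(x)) < ∞). -/
open Set Bornology Metric

/-!
Suppose `f` and `g` are not close. Choose points `xₙ` inductively with `d(f xₙ, g xₙ) ≥ n` and
with `f xₙ`, `g xₙ` farther from a base point than all earlier images by more than `n`; then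
`d(f xₙ, g xₘ) ≥ max n m`, so `S = {xₙ}` is unbounded while `f(S)` and `g(S)` are coarsely
disjoint. An ultrafilter containing `S` and finer than the cobornology of `X` is a coarse
ultrafilter, and so are its images under the coarsely proper maps `f` and `g`; these images
contain `f(S)` and `g(S)`, so they are not asymptotically alike.
-/

open Filter

section

variable {X Y : Type*} [PseudoMetricSpace X] [PseudoMetricSpace Y]

theorem notCD_of_not_isBounded_inter {A B : Set X} (h : ¬ IsBounded (A ∩ B)) : NotCD A B := by
  have hdiag : ∀ C : Set X, entImg {p : X × X | p.1 = p.2} C = C := fun C => by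
    ext y; simp [entImg]
  exact ⟨{p | p.1 = p.2}, ⟨0, fun p hp => by simp_all⟩, by rwa [hdiag, hdiag]⟩

theorem CUnif.isBounded_image {f : X → Y} (hf : CUnif f) {S : Set X} (hS : IsBounded S) :
    IsBounded (f '' S) := by
  obtain ⟨C, hC⟩ := Metric.isBounded_iff.1 hS
  obtain ⟨C', hC'⟩ := hf (S ×ˢ S) ⟨C, fun p hp => hC hp.1 hp.2⟩
  refine Metric.isBounded_iff.2 ⟨C', ?_⟩
  rintro _ ⟨s, hs, rfl⟩ _ ⟨t, ht, rfl⟩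
  exact hC' (f s, f t) ⟨(s, t), ⟨hs, ht⟩, rfl⟩

theorem CUnif.exists_dist_le_of_isBounded {f g : X → Y} (hf : CUnif f) (hg : CUnif g)
    {S : Set X} (hS : IsBounded S) : ∃ D : ℝ, ∀ x ∈ S, dist (f x) (g x) ≤ D := by
  obtain ⟨D, hD⟩ := Metric.isBounded_iff.1 ((hf.isBounded_image hS).union (hg.isBounded_image hS))
  exact ⟨D, fun x hx => hD (Or.inl (mem_image_of_mem f hx)) (Or.inr (mem_image_of_mem g hx))⟩

theorem CProper.tendsto_cobounded {f : X → Y} (hf : CProper f) :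
    Tendsto f (cobounded X) (cobounded Y) := fun s hs => by
  simpa only [mem_map, isBounded_def, preimage_compl, compl_compl] using
    hf sᶜ (isBounded_def.2 (by simpa))

theorem Coarse.exists_far_of_not_close {f g : X → Y} (hf : Coarse f) (hg : Coarse g)
    (hfg : ∀ C : ℝ, ∃ x, C < dist (f x) (g x)) (q : Y) (C r : ℝ) :
    ∃ x, C ≤ dist (f x) (g x) ∧ r ≤ dist (f x) q ∧ r ≤ dist (g x) q := by
  have hT : ¬ IsBounded {x | C ≤ dist (f x) (g x)} := fun hT => by
    obtain ⟨D, hD⟩ := hf.1.exists_dist_le_of_isBounded hg.1 hT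
    obtain ⟨x, hx⟩ := hfg (max C D)
    exact (hD x ((le_max_left C D).trans hx.le)).not_gt ((le_max_right C D).trans_lt hx)
  have hB := (hf.2 (closedBall q r) isBounded_closedBall).union
    (hg.2 (closedBall q r) isBounded_closedBall)
  obtain ⟨x, hxT, hxB⟩ := not_subset.1 fun hsub => hT (hB.subset hsub)
  simp only [mem_union, mem_preimage, mem_closedBall, not_or, not_le] at hxB
  exact ⟨x, hxT, hxB.1.le, hxB.2.le⟩

theorem exists_seq_le_dist {ι : Type*} (a b : ι → Y) (q : Y)
    (h : ∀ C r : ℝ, ∃ i, C ≤ dist (a i) (b i) ∧ r ≤ dist (a i) q ∧ r ≤ dist (b i) q) :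
    ∃ s : ℕ → ι, ∀ n m : ℕ, (n : ℝ) ≤ dist (a (s n)) (b (s m)) := by
  choose pick hdiag ha hb using h
  let R : ι → ℝ := fun i => max (dist (a i) q) (dist (b i) q)
  let s : ℕ → ι := fun n => Nat.rec (pick 0 0) (fun k i => pick (k + 1) (k + 1 + R i)) n
  have hs : ∀ n : ℕ, s (n + 1) = pick (n + 1) (n + 1 + R (s n)) := fun _ => rfl
  have hdisp : ∀ n : ℕ, (n : ℝ) ≤ dist (a (s n)) (b (s n))
    | 0 => by simp
    | n + 1 => by rw [hs]; exact_mod_cast hdiag _ _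
  have hmono : Monotone (R ∘ s) := monotone_nat_of_le_succ fun n => by
    have hfar := ha (n + 1) (n + 1 + R (s n))
    have hR : dist (a (s (n + 1))) q ≤ R (s (n + 1)) := le_max_left _ _
    rw [← hs] at hfar
    simp only [Function.comp_apply]
    linarith [n.cast_nonneg (α := ℝ)]
  have hlater : ∀ n m : ℕ, m < n →
      (n : ℝ) ≤ dist (a (s n)) (b (s m)) ∧ (n : ℝ) ≤ dist (a (s m)) (b (s n)) := by
    rintro (_ | k) m hmk
    · omega
    have hRm : R (s m) ≤ R (s k) := hmono (Nat.le_of_lt_succ hmk)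
    have haq : dist (a (s m)) q ≤ R (s m) := le_max_left _ _
    have hbq : dist (b (s m)) q ≤ R (s m) := le_max_right _ _
    have ha' := ha (k + 1) (k + 1 + R (s k))
    have hb' := hb (k + 1) (k + 1 + R (s k))
    have hta := dist_triangle (a (s (k + 1))) (b (s m)) q
    have htb := dist_triangle_left (b (s (k + 1))) q (a (s m))
    rw [hs] at hta htb ⊢
    push_cast
    constructor <;> linarith
  refine ⟨s, fun n m => ?_⟩
  rcases lt_trichotomy n m with hnm | rfl | hmn
  · exact (Nat.cast_le.2 hnm.le).trans (hlater m n hnm).2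
  · exact hdisp n
  · exact (hlater n m hmn).1

theorem cd_range_of_le_dist (u v : ℕ → Y) (h : ∀ n m : ℕ, (n : ℝ) ≤ dist (u n) (v m)) :
    CD (range u) (range v) := by
  rintro E ⟨C, hC⟩
  refine ((isBounded_biUnion (finite_Iic ⌊2 * C⌋₊)).2 fun n _ =>
    isBounded_closedBall (x := u n) (r := C)).subset ?_
  rintro y ⟨⟨_, ⟨n, rfl⟩, hny⟩, ⟨_, ⟨m, rfl⟩, hmy⟩⟩
  have hny : dist (u n) y ≤ C := hC _ hny
  have hmy : dist (v m) y ≤ C := hC _ hmy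
  have hnm : (n : ℝ) ≤ 2 * C := by
    linarith [h n m, dist_triangle_right (u n) (v m) y]
  exact mem_biUnion (Nat.le_floor hnm) (mem_closedBall'.2 hny)

theorem Coarse.exists_not_isBounded_cd_image {f g : X → Y} (hf : Coarse f) (hg : Coarse g)
    (hfg : ∀ C : ℝ, ∃ x, C < dist (f x) (g x)) :
    ∃ S : Set X, ¬ IsBounded S ∧ CD (f '' S) (g '' S) := by
  obtain ⟨x₀, -⟩ := hfg 0
  obtain ⟨s, hs⟩ := exists_seq_le_dist f g (f x₀) (hf.exists_far_of_not_close hg hfg (f x₀))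
  refine ⟨range s, fun hb => ?_, by
    simpa only [← range_comp] using cd_range_of_le_dist (f ∘ s) (g ∘ s) hs⟩
  obtain ⟨D, hD⟩ := hf.1.exists_dist_le_of_isBounded hg.1 hb
  obtain ⟨n, hn⟩ := exists_nat_gt D
  exact (hn.trans_le (hs n n)).not_ge (hD _ (mem_range_self n))

end

section

variable {X : Type*} [PseudoMetricSpace X]

theorem exists_ultrafilter_le_cobounded_of_not_isBounded {S : Set X} (hS : ¬ IsBounded S) :
    ∃ 𝒰 : Ultrafilter X, ↑𝒰 ≤ cobounded X ∧ S ∈ 𝒰 := by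
  have : NeBot (cobounded X ⊓ 𝓟 S) := ⟨by rwa [Ne, inf_principal_eq_bot, ← isBounded_def]⟩
  obtain ⟨𝒰, h𝒰⟩ := Ultrafilter.exists_le (cobounded X ⊓ 𝓟 S)
  exact ⟨𝒰, h𝒰.trans inf_le_left, le_principal_iff.1 (h𝒰.trans inf_le_right)⟩

theorem Ultrafilter.not_isBounded_of_le_cobounded {𝒰 : Ultrafilter X} (h𝒰 : ↑𝒰 ≤ cobounded X)
    {A : Set X} (hA : A ∈ 𝒰) : ¬ IsBounded A := fun hb =>
  Ultrafilter.compl_notMem_iff.2 hA (h𝒰 (isBounded_def.1 hb))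

def CUF.ofUltrafilter (𝒰 : Ultrafilter X) (h𝒰 : ↑𝒰 ≤ cobounded X) : CUF X where
  sets := {A | A ∈ 𝒰}
  pairClose _ hA _ hB :=
    notCD_of_not_isBounded_inter (𝒰.not_isBounded_of_le_cobounded h𝒰 (inter_mem hA hB))
  split _ _ := Ultrafilter.union_mem_iff.1
  univ_mem := Filter.univ_mem

end

/-- coarse maps with asymptotically alike pushforwards of every coarse
ultrafilter are close. -/
theorem stmt6 {X Y : Type*} [MetricSpace X] [MetricSpace Y] (f g : X → Y)
    (hf : Coarse f) (hg : Coarse g)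
    (h : ∀ (F : CUF X) (F' G' : CUF Y),
      F'.sets = push f F → G'.sets = push g F → AAlike F' G') :
    ∃ C : ℝ, ∀ x : X, dist (f x) (g x) ≤ C := by
  by_contra! hfg
  obtain ⟨S, hS, hcd⟩ := hf.exists_not_isBounded_cd_image hg hfg
  obtain ⟨𝒰, h𝒰, hS𝒰⟩ := exists_ultrafilter_le_cobounded_of_not_isBounded hS
  have hmap : ∀ k : X → Y, CProper k → ↑(𝒰.map k) ≤ cobounded Y := fun k hk =>
    (map_mono h𝒰).trans hk.tendsto_cobounded
  obtain ⟨E, hE, hunb⟩ := h (.ofUltrafilter 𝒰 h𝒰) (.ofUltrafilter (𝒰.map f) (hmap f hf.2))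
    (.ofUltrafilter (𝒰.map g) (hmap g hg.2)) rfl rfl (f '' S) (image_mem_map hS𝒰)
    (g '' S) (image_mem_map hS𝒰)
  exact hunb (hcd E hE)
end
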